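/- arXiv:1201.0899 — 4 statements merged into one kernel-verified Lean document; each statement's English description precedes it below -/
import Mathlib

section
/- Let T be a Z/n-linear triangulated category, i.e. n·id_X = 0 for every object X. Then every object of T has n-order ≥ k for every natural number k (i.e. infinite n-order). -/
open CategoryTheory CategoryTheory.Limits CategoryTheory.Pretriangulated

universe v u

/-- The inductive "n-order ≥ k" predicate on objects of a triangulated category. -/
def nOrderGE (C : Type u) [Category.{v} C] [HasZeroObject C] [Preadditive C] [HasShift C ℤ]
    [∀ i : ℤ, (shiftFunctor C i).Additive] [Pretriangulated C]
    (n : ℕ) : ℕ → C → Prop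
  | 0, _ => True
  | k + 1, X => ∀ ⦃K Kn : C⦄ (π : K ⟶ Kn) (δ : Kn ⟶ K⟦(1 : ℤ)⟧),
      (Triangle.mk (n • 𝟙 K) π δ ∈ distTriang C) →
      ∀ f : K ⟶ X, ∃ fb : Kn ⟶ X, π ≫ fb = f ∧
        ∃ (Cf : C) (g : X ⟶ Cf) (h : Cf ⟶ Kn⟦(1 : ℤ)⟧),
          (Triangle.mk fb g h ∈ distTriang C) ∧ nOrderGE C n k Cf

/-! When `n • 𝟙 K = 0`, the first map of the triangle `K → K → K/n → K[1]` vanishes, so every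
`f : K → X` extends over `π : K → K/n`. Any extension has a cone, and since all objects have
`n`-order `≥ k` by induction, so does that cone. -/

namespace CategoryTheory.Pretriangulated.Triangle

variable {C : Type u} [Category.{v} C] [HasZeroObject C] [Preadditive C] [HasShift C ℤ]
  [∀ i : ℤ, (CategoryTheory.shiftFunctor C i).Additive] [Pretriangulated C]

lemma exists_mor₂_comp_eq_of_mor₁_eq_zero (T : Triangle C) (hT : T ∈ distTriang C)
    (h : T.mor₁ = 0) {X : C} (f : T.obj₂ ⟶ X) : ∃ g : T.obj₃ ⟶ X, T.mor₂ ≫ g = f := by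
  obtain ⟨g, hg⟩ := yoneda_exact₂ T hT f (by rw [h, zero_comp])
  exact ⟨g, hg.symm⟩

end CategoryTheory.Pretriangulated.Triangle

/-- In a `ℤ/n`-linear triangulated category (i.e. `n • 𝟙 X = 0` for
every object `X`), every object has `n`-order `≥ k` for every `k`. -/
theorem nOrderGE_of_nsmul_id_zero
    {C : Type u} [Category.{v} C] [HasZeroObject C] [Preadditive C] [HasShift C ℤ]
    [∀ i : ℤ, (shiftFunctor C i).Additive] [Pretriangulated C]
    (n : ℕ) (hn : 1 ≤ n) (hlin : ∀ X : C, n • 𝟙 X = 0) :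
    ∀ (X : C) (k : ℕ), nOrderGE C n k X := by
  intro X k
  induction k generalizing X with
  | zero => trivial
  | succ k ih =>
    intro K Kn π δ hT f
    obtain ⟨fb, hfb⟩ := Triangle.exists_mor₂_comp_eq_of_mor₁_eq_zero _ hT (hlin K) f
    obtain ⟨Cf, g, h, hCone⟩ := distinguished_cocone_triangle fb
    exact ⟨fb, hfb, Cf, g, h, hCone, ih Cf⟩
end

section
/- In the setting of a mod-n reduction (ρ_* : T → T/n with right adjoint ρ^*, unit η, counit ε, and distinguished triangles X --(n·id)--> X --η_X--> ρ^*(ρ_* X) → X[1]), for every object Z of T/n one has n·id_{ρ^*Z} = 0 in T. -/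
open CategoryTheory CategoryTheory.Limits CategoryTheory.Pretriangulated

universe v₁ v₂ u₁ u₂

instance Adjunction.isSplitMono_unit_app_obj {C : Type u₁} [Category.{v₁} C] {D : Type u₂}
    [Category.{v₂} D] {F : C ⥤ D} {G : D ⥤ C} (adj : F ⊣ G) (Z : D) :
    IsSplitMono (adj.unit.app (G.obj Z)) :=
  IsSplitMono.mk' ⟨G.map (adj.counit.app Z), adj.right_triangle_components Z⟩

/-- In the setting of a mod-`n` reduction (an exact functor
`ρs : C ⥤ D` with exact right adjoint `ρu` and distinguished triangles
`X --(n·id)--> X --η_X--> ρu(ρs X) --> X⟦1⟧` for all `X`, where `η` is the adjunction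
unit), one has `n • 𝟙 (ρu Z) = 0` for every object `Z` of `D`. -/
theorem nsmul_id_rightAdjoint_obj_eq_zero
    {C : Type u₁} [Category.{v₁} C] [HasZeroObject C] [Preadditive C] [HasShift C ℤ]
    [∀ i : ℤ, (shiftFunctor C i).Additive] [Pretriangulated C]
    {D : Type u₂} [Category.{v₂} D] [HasZeroObject D] [Preadditive D] [HasShift D ℤ]
    [∀ i : ℤ, (shiftFunctor D i).Additive] [Pretriangulated D]
    (n : ℕ) (ρs : C ⥤ D) (ρu : D ⥤ C)
    [ρs.CommShift ℤ] [ρs.IsTriangulated] [ρu.CommShift ℤ] [ρu.IsTriangulated]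
    (adj : ρs ⊣ ρu)
    (hred : ∀ X : C, ∃ δ : ρu.obj (ρs.obj X) ⟶ X⟦(1 : ℤ)⟧,
      Triangle.mk (n • 𝟙 X) (adj.unit.app X) δ ∈ distTriang C) :
    ∀ Z : D, n • 𝟙 (ρu.obj Z) = 0 := by
  intro Z
  obtain ⟨δ, hT⟩ := hred (ρu.obj Z)
  exact Triangle.mor₁_eq_zero_of_mono₂ _ hT (inferInstanceAs (Mono (adj.unit.app _)))
end

section
/- Let Δ be the category of finite nonempty totally ordered sets [n] = {0 < … < n} with injective monotone maps, and let Δ[i] ⊗ Δ[j] denote the geometric product of the representable Δ-sets: an n-simplex is an equivalence class of triples (x, y; φ) with x : [a] → [i], y : [b] → [j] injective monotone and φ : [n] → [a]×[b] injective monotone, modulo (xα, yβ; φ) ∼ (x, y; (α×β)φ). Then the set of n-simplices of Δ[i] ⊗ Δ[j] is in natural bijection with the set of injective monotone maps [n] → [i]×[j], where [i]×[j] carries the product partial order. -/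
open Function

/-- A generating triple for an `n`-simplex of the geometric product `Δ[i] ⊗ Δ[j]` of
representable Δ-sets: injective monotone maps `x : [a] → [i]`, `y : [b] → [j]` and an
injective monotone map `φ : [n] → [a] × [b]` (product partial order). -/
structure GPTriple (i j n : ℕ) where
  a : ℕ
  b : ℕ
  x : Fin (a + 1) → Fin (i + 1)
  y : Fin (b + 1) → Fin (j + 1)
  φ : Fin (n + 1) → Fin (a + 1) × Fin (b + 1)
  hx : Monotone x ∧ Injective x
  hy : Monotone y ∧ Injective y
  hφ : Monotone φ ∧ Injective φ

/-- The generating relation `(x ∘ α, y ∘ β; φ) ∼ (x, y; (α × β) ∘ φ)` on triples, for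
injective monotone `α`, `β`. The `n`-simplices of `Δ[i] ⊗ Δ[j]` are the equivalence
classes, i.e. the quotient `Quot (GPRel i j n)`. -/
def GPRel (i j n : ℕ) (t s : GPTriple i j n) : Prop :=
  ∃ (α : Fin (t.a + 1) → Fin (s.a + 1)) (β : Fin (t.b + 1) → Fin (s.b + 1)),
    Monotone α ∧ Injective α ∧ Monotone β ∧ Injective β ∧
    t.x = s.x ∘ α ∧ t.y = s.y ∘ β ∧
    s.φ = fun m => (α (t.φ m).1, β (t.φ m).2)

/-- The realization `(x × y) ∘ φ` of a triple. -/
def GPTriple.real {i j n : ℕ} (t : GPTriple i j n) :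
    Fin (n + 1) → Fin (i + 1) × Fin (j + 1) :=
  fun m => (t.x (t.φ m).1, t.y (t.φ m).2)

theorem GPTriple.real_mono {i j n : ℕ} (t : GPTriple i j n) : Monotone t.real :=
  fun _ _ h => ⟨t.hx.1 (t.hφ.1 h).1, t.hy.1 (t.hφ.1 h).2⟩

theorem GPTriple.real_inj {i j n : ℕ} (t : GPTriple i j n) : Injective t.real := by
  intro m m' h
  apply t.hφ.2
  exact Prod.ext (t.hx.2 (congrArg Prod.fst h)) (t.hy.2 (congrArg Prod.snd h))

/-- The canonical triple `(id, id; f)`. -/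
def GPcan (i j n : ℕ)
    (f : {f : Fin (n + 1) → Fin (i + 1) × Fin (j + 1) // Monotone f ∧ Injective f}) :
    GPTriple i j n :=
  ⟨i, j, id, id, f.1, ⟨monotone_id, injective_id⟩, ⟨monotone_id, injective_id⟩, f.2⟩

theorem GPrel_can {i j n : ℕ} (t : GPTriple i j n) :
    GPRel i j n t (GPcan i j n ⟨t.real, t.real_mono, t.real_inj⟩) :=
  ⟨t.x, t.y, t.hx.1, t.hx.2, t.hy.1, t.hy.2, rfl, rfl, rfl⟩

/-- The set of `n`-simplices of the geometric product `Δ[i] ⊗ Δ[j]`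
(the quotient of triples by the generated equivalence relation) is in natural bijection
with the set of injective monotone maps `[n] → [i] × [j]` (product partial order), the
bijection sending the class of `(x, y; φ)` to `(x × y) ∘ φ`. -/
theorem geometric_product_simplices_equiv (i j n : ℕ) :
    ∃ e : Quot (GPRel i j n) ≃
        {f : Fin (n + 1) → Fin (i + 1) × Fin (j + 1) // Monotone f ∧ Injective f},
      ∀ t : GPTriple i j n,
        ((e (Quot.mk _ t) : {f : Fin (n + 1) → Fin (i + 1) × Fin (j + 1) //
            Monotone f ∧ Injective f}) : Fin (n + 1) → Fin (i + 1) × Fin (j + 1)) =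
          fun m => (t.x (t.φ m).1, t.y (t.φ m).2) := by
  have hlift : ∀ t s : GPTriple i j n, GPRel i j n t s →
      (⟨t.real, t.real_mono, t.real_inj⟩ :
        {f : Fin (n + 1) → Fin (i + 1) × Fin (j + 1) // Monotone f ∧ Injective f}) =
      ⟨s.real, s.real_mono, s.real_inj⟩ := by
    rintro t s ⟨α, β, hαm, hαi, hβm, hβi, hx, hy, hφ⟩
    refine Subtype.ext (funext fun m => ?_)
    simp [GPTriple.real, hx, hy, hφ]
  have hleft : ∀ q : Quot (GPRel i j n),
      Quot.mk _ (GPcan i j n (Quot.lift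
        (fun t => (⟨t.real, t.real_mono, t.real_inj⟩ :
          {f : Fin (n + 1) → Fin (i + 1) × Fin (j + 1) // Monotone f ∧ Injective f}))
        hlift q)) = q := by
    intro q
    induction q using Quot.ind with
    | _ t => exact (Quot.sound (GPrel_can t)).symm
  exact ⟨⟨Quot.lift (fun t => ⟨t.real, t.real_mono, t.real_inj⟩) hlift,
      fun f => Quot.mk _ (GPcan i j n f), hleft, fun f => Subtype.ext rfl⟩, fun t => by
    simp only [Equiv.coe_fn_mk]
    rfl⟩
end

section
/- Let K ⊆ L be an inclusion of Δ-sets. Then K → L is an elementary expansion of dimension n (i.e. there exist an n-simplex e ∈ L_n \ K_n and an index i ∈ {0,…,n} such that L is the disjoint union of K and {e, e d_i}, and e d_j ∈ K for all j ≠ i) if and only if there is a pushout square of Δ-sets with top row the horn inclusion Λ^i[n] → Δ[n], left vertical map Λ^i[n] → K, and bottom row the inclusion K → L, for some i ∈ {0,…,n}. -/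
/-- A Δ-set (semisimplicial set): graded sets of simplices with face maps satisfying
the semisimplicial identities. -/
structure DSet where
  X : ℕ → Type
  d : ∀ n, Fin (n + 2) → X (n + 1) → X n
  rel : ∀ (n : ℕ) (i j : Fin (n + 2)), i ≤ j → ∀ x : X (n + 2),
    d n i (d (n + 1) j.succ x) = d n j (d (n + 1) i.castSucc x)

/-- A morphism of Δ-sets. -/
@[ext]
structure DHom (K L : DSet) where
  app : ∀ n, K.X n → L.X n
  comm : ∀ (n : ℕ) (i : Fin (n + 2)) (x : K.X (n + 1)),
    app n (K.d n i x) = L.d n i (app (n + 1) x)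

/-- Composition of morphisms of Δ-sets. -/
def DHom.comp {K L M : DSet} (f : DHom K L) (g : DHom L M) : DHom K M where
  app n x := g.app n (f.app n x)
  comm n i x := by (try dsimp only); rw [f.comm, g.comm]

/-- A commuting square of Δ-set morphisms is a pushout if it satisfies the universal
property of pushouts (pushouts of Δ-sets are computed levelwise in sets). -/
def IsPushoutSq {Z X Y P : DSet} (f : DHom Z X) (g : DHom Z Y)
    (u : DHom X P) (v : DHom Y P) : Prop :=
  f.comp u = g.comp v ∧
  ∀ (W : DSet) (a : DHom X W) (b : DHom Y W), f.comp a = g.comp b →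
    ∃! c : DHom P W, u.comp c = a ∧ v.comp c = b

/-- A sub-Δ-set of `L`: a family of subsets of simplices closed under faces. -/
structure DSub (L : DSet) where
  mem : ∀ n, Set (L.X n)
  stable : ∀ (n : ℕ) (i : Fin (n + 2)) (x : L.X (n + 1)),
    x ∈ mem (n + 1) → L.d n i x ∈ mem n

/-- The Δ-set underlying a sub-Δ-set. -/
def DSub.toDSet {L : DSet} (K : DSub L) : DSet where
  X n := {x // x ∈ K.mem n}
  d n i x := ⟨L.d n i x.1, K.stable n i x.1 x.2⟩
  rel n i j h x := Subtype.ext (L.rel n i j h x.1)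

/-- The inclusion of a sub-Δ-set. -/
def DSub.ι {L : DSet} (K : DSub L) : DHom K.toDSet L where
  app _ x := x.1
  comm _ _ _ := rfl

/-- The inclusion `K → L` is an elementary expansion of dimension `n+1`: there are an
`(n+1)`-simplex `e ∈ L \ K` and an index `i` such that `L` is the disjoint union of `K`
and `{e, e d_i}`, with `e d_j ∈ K` for all `j ≠ i`. -/
def IsElemExpansion (L : DSet) (K : DSub L) (n : ℕ) : Prop :=
  ∃ (e : L.X (n + 1)) (i : Fin (n + 2)),
    e ∉ K.mem (n + 1) ∧ L.d n i e ∉ K.mem n ∧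
    (∀ j : Fin (n + 2), j ≠ i → L.d n j e ∈ K.mem n) ∧
    ∀ (m : ℕ) (z : L.X m),
      z ∈ K.mem m ∨ (∃ _ : m = n + 1, HEq z e) ∨ (∃ _ : m = n, HEq z (L.d n i e))


/-- The semisimplicial identity for the coface maps `Fin.succAbove`. -/
lemma succAbove_succAbove {m : ℕ} (i j : Fin (m + 2)) (h : i ≤ j) (a : Fin (m + 1)) :
    (j.succ).succAbove (i.succAbove a) = (i.castSucc).succAbove (j.succAbove a) := by
  have h1 := SimplexCategory.δ_comp_δ (n := m) h
  have h2 := congrArg (fun f => (SimplexCategory.Hom.toOrderHom f) a) h1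
  simpa [SimplexCategory.δ] using h2

/-- The standard simplex `Δ[n]` as a Δ-set: `m`-simplices are the injective monotone
maps `[m] → [n]`, with faces given by precomposition with the coface maps. -/
def simplexDSet (n : ℕ) : DSet where
  X m := {f : Fin (m + 1) → Fin (n + 1) // Monotone f ∧ Function.Injective f}
  d m i f := ⟨f.1 ∘ i.succAbove, by
    constructor
    · exact f.2.1.comp (Fin.strictMono_succAbove i).monotone
    · exact f.2.2.comp (Fin.succAbove_right_injective)⟩
  rel n i j h x :=
    Subtype.ext (funext fun a => congrArg x.1 (succAbove_succAbove i j h a))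

/-- The horn `Λ^i[n]` as a Δ-set: the simplices `f` of `Δ[n]` that miss some vertex
`j ≠ i` (equivalently, `Δ[n]` minus the top simplex and its `i`-th face). -/
def hornDSet (n : ℕ) (i : Fin (n + 1)) : DSet where
  X m := {f : Fin (m + 1) → Fin (n + 1) // (Monotone f ∧ Function.Injective f) ∧
    ∃ j, j ≠ i ∧ j ∉ Set.range f}
  d m p f := ⟨f.1 ∘ p.succAbove, by
    refine ⟨⟨f.2.1.1.comp (Fin.strictMono_succAbove p).monotone,
      f.2.1.2.comp (Fin.succAbove_right_injective)⟩, ?_⟩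
    obtain ⟨j, hj, hjr⟩ := f.2.2
    exact ⟨j, hj, fun ⟨a, ha⟩ => hjr ⟨p.succAbove a, ha⟩⟩⟩
  rel n i j h x :=
    Subtype.ext (funext fun a => congrArg x.1 (succAbove_succAbove i j h a))

/-- The inclusion of the horn into the standard simplex. -/
def hornIncl (n : ℕ) (i : Fin (n + 1)) : DHom (hornDSet n i) (simplexDSet n) where
  app m f := ⟨f.1, f.2.1⟩
  comm _ _ _ := rfl

/-!
By the Yoneda lemma, maps `Δ[n+1] → L` correspond to `(n+1)`-simplices `e` of `L`, and such a
map sends `Λ^i[n+1]` into `K` exactly when the faces `e d_j`, `j ≠ i`, lie in `K`. Since pushouts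
are computed levelwise and `K → L` is injective, a commuting square
`Λ^i[n+1] → K`, `Δ[n+1] → L` is a pushout iff `Δ[n+1] → L` maps the simplices outside the horn
bijectively onto those outside `K`. The simplices outside the horn are the top simplex and its
`i`-th face, so this says that `L \ K = {e, e d_i}`.
-/

def DHom.id (L : DSet) : DHom L L where
  app _ x := x
  comm _ _ _ := rfl

lemma DHom.congr_app {K L : DSet} {φ ψ : DHom K L} (h : φ = ψ) (m : ℕ) (x : K.X m) :
    φ.app m x = ψ.app m x :=
  h ▸ rfl

def DHom.range {K L : DSet} (φ : DHom K L) : DSub L where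
  mem m := Set.range (φ.app m)
  stable n i _ := by
    rintro ⟨y, rfl⟩
    exact ⟨K.d n i y, φ.comm n i y⟩

namespace DSub

variable {L : DSet}

instance : Max (DSub L) where
  max K K' :=
    { mem := fun m => K.mem m ∪ K'.mem m
      stable := fun n i x hx => hx.imp (K.stable n i x) (K'.stable n i x) }

def lift (K : DSub L) {Z : DSet} (φ : DHom Z L) (h : ∀ m z, φ.app m z ∈ K.mem m) :
    DHom Z K.toDSet where
  app m z := ⟨φ.app m z, h m z⟩
  comm m p z := Subtype.ext (φ.comm m p z)

open Classical in
noncomputable def collapseApp (K : DSub L) (m : ℕ) (x : L.X m) : Option (L.X m) :=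
  if x ∈ K.mem m then none else some x

lemma collapseApp_of_mem (K : DSub L) {m : ℕ} {x : L.X m} (hx : x ∈ K.mem m) :
    K.collapseApp m x = none :=
  if_pos hx

lemma collapseApp_of_notMem (K : DSub L) {m : ℕ} {x : L.X m} (hx : x ∉ K.mem m) :
    K.collapseApp m x = some x :=
  if_neg hx

lemma collapseApp_bind (K : DSub L) {m : ℕ} (p : Fin (m + 2)) (x : L.X (m + 1)) :
    (K.collapseApp (m + 1) x).bind (fun y => K.collapseApp m (L.d m p y)) =
      K.collapseApp m (L.d m p x) := by
  by_cases hx : x ∈ K.mem (m + 1)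
  · rw [K.collapseApp_of_mem hx, K.collapseApp_of_mem (K.stable m p x hx)]
    rfl
  · rw [K.collapseApp_of_notMem hx]
    rfl

/-- The quotient `L / K`: `K` is collapsed to the base point `none`, present in every degree. -/
noncomputable def collapse (K : DSub L) : DSet where
  X m := Option (L.X m)
  d m p o := o.bind fun x => K.collapseApp m (L.d m p x)
  rel m p q hpq o := by
    cases o with
    | none => rfl
    | some x =>
      simp only [Option.bind_some, collapseApp_bind]
      rw [L.rel m p q hpq x]

noncomputable def collapseHom (K : DSub L) : DHom L K.collapse where
  app := K.collapseApp
  comm _ p x := (K.collapseApp_bind p x).symm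

end DSub

section Pushout

variable {Z X L : DSet} {K : DSub L} {f : DHom Z X} {u : DHom Z K.toDSet} {v : DHom X L}

lemma app_app_mem_of_comp_eq (hsq : f.comp v = u.comp K.ι) (m : ℕ) (y : Z.X m) :
    v.app m (f.app m y) ∈ K.mem m := by
  have hvf : v.app m (f.app m y) = (u.app m y).1 := DHom.congr_app hsq m y
  exact hvf ▸ (u.app m y).2

theorem IsPushoutSq.bijOn (h : IsPushoutSq f u v K.ι) (m : ℕ) :
    Set.BijOn (v.app m) (Set.range (f.app m))ᶜ (K.mem m)ᶜ := by
  obtain ⟨hsq, hup⟩ := h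
  have hvf : ∀ m y, v.app m (f.app m y) = (u.app m y).1 := DHom.congr_app hsq
  -- Mapping `L` to `X / f(Z)` separates the simplices `v x`, `x ∉ f(Z)`, from each other
  -- and from `K`.
  obtain ⟨c, ⟨hcv, hcK⟩, -⟩ := hup f.range.collapse f.range.collapseHom
    ⟨fun _ _ => none, fun _ _ _ => rfl⟩
    (DHom.ext (funext₂ fun m y => f.range.collapseApp_of_mem ⟨y, rfl⟩))
  have hc : ∀ x ∉ Set.range (f.app m), c.app m (v.app m x) = some x := fun x hx =>
    (DHom.congr_app hcv m x).trans (f.range.collapseApp_of_notMem hx)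
  -- Mapping `L` to `K ∪ v(X)` shows that `L` is covered by `K` and `v(X)`.
  let K' := K ⊔ v.range
  obtain ⟨c', ⟨hc'v, hc'K⟩, -⟩ := hup K'.toDSet (K'.lift v fun m x => Or.inr ⟨x, rfl⟩)
    (K'.lift K.ι fun m z => Or.inl z.2)
    (DHom.ext (funext₂ fun m y => Subtype.ext (hvf m y)))
  obtain ⟨_, -, huniq⟩ := hup L v K.ι hsq
  have hid : c'.comp K'.ι = DHom.id L :=
    (huniq _ ⟨congrArg (·.comp K'.ι) hc'v, congrArg (·.comp K'.ι) hc'K⟩).trans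
      (huniq _ ⟨rfl, rfl⟩).symm
  refine ⟨fun x hx hvx => ?_, fun x hx y hy hxy => ?_, fun z hz => ?_⟩
  · exact Option.some_ne_none x ((hc x hx).symm.trans (DHom.congr_app hcK m ⟨_, hvx⟩))
  · exact Option.some_injective _ ((hc x hx).symm.trans (hxy ▸ hc y hy))
  · have hz' : (c'.comp K'.ι).app m z ∈ K'.mem m := (c'.app m z).2
    rw [DHom.congr_app hid m z] at hz'
    obtain hzK | ⟨x, rfl⟩ := hz'
    · exact absurd hzK hz
    refine ⟨x, ?_, rfl⟩
    rintro ⟨y, rfl⟩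
    exact hz (app_app_mem_of_comp_eq hsq m y)

theorem IsPushoutSq.of_bijOn (hsq : f.comp v = u.comp K.ι)
    (hbij : ∀ m, Set.BijOn (v.app m) (Set.range (f.app m))ᶜ (K.mem m)ᶜ) :
    IsPushoutSq f u v K.ι := by
  classical
  refine ⟨hsq, fun W a b hab => ?_⟩
  have hvf : ∀ m y, v.app m (f.app m y) = (u.app m y).1 := DHom.congr_app hsq
  have hab' : ∀ m y, a.app m (f.app m y) = b.app m (u.app m y) := DHom.congr_app hab
  have hcover : ∀ m z, z ∈ K.mem m ∨ ∃ x, v.app m x = z := fun m z =>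
    or_iff_not_imp_left.2 fun hz =>
      let ⟨x, _, hx⟩ := (hbij m).surjOn hz
      ⟨x, hx⟩
  let app (m : ℕ) (z : L.X m) : W.X m :=
    if hz : z ∈ K.mem m then b.app m ⟨z, hz⟩ else a.app m ((hbij m).surjOn hz).choose
  have app_ι : ∀ m (k : K.toDSet.X m), app m k.1 = b.app m k := fun m k => dif_pos k.2
  have app_v : ∀ m x, app m (v.app m x) = a.app m x := by
    intro m x
    by_cases hx : x ∈ Set.range (f.app m)
    · obtain ⟨y, rfl⟩ := hx
      rw [hvf, app_ι, hab']
    · have hvx := (hbij m).mapsTo hx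
      have hspec := ((hbij m).surjOn hvx).choose_spec
      simp only [app, dif_neg hvx]
      rw [(hbij m).injOn hspec.1 hx hspec.2]
  have app_uniq : ∀ c : DHom L W, v.comp c = a → K.ι.comp c = b → c.app = app := by
    intro c hca hcb
    funext m z
    obtain hz | ⟨x, rfl⟩ := hcover m z
    · exact (DHom.congr_app hcb m ⟨z, hz⟩).trans (app_ι m ⟨z, hz⟩).symm
    · exact (DHom.congr_app hca m x).trans (app_v m x).symm
  have app_comm : ∀ m p z, app m (L.d m p z) = W.d m p (app (m + 1) z) := by
    intro m p z
    obtain hz | ⟨x, rfl⟩ := hcover (m + 1) z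
    · exact (app_ι m ⟨_, K.stable m p z hz⟩).trans
        ((b.comm m p ⟨z, hz⟩).trans (congrArg (W.d m p) (app_ι _ ⟨z, hz⟩).symm))
    · rw [← v.comm, app_v, app_v, a.comm]
  let c : DHom L W := ⟨app, app_comm⟩
  exact ⟨c, ⟨DHom.ext (funext₂ app_v), DHom.ext (funext₂ app_ι)⟩,
    fun c' ⟨h₁, h₂⟩ => DHom.ext (app_uniq c' h₁ h₂)⟩

end Pushout

namespace simplexDSet

variable {N m : ℕ}

def top (N : ℕ) : (simplexDSet N).X N := ⟨id, monotone_id, Function.injective_id⟩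

def coface (j : Fin (N + 2)) : DHom (simplexDSet N) (simplexDSet (N + 1)) where
  app _ g := ⟨j.succAbove ∘ g.1, (Fin.strictMono_succAbove j).monotone.comp g.2.1,
    Fin.succAbove_right_injective.comp g.2.2⟩
  comm _ _ _ := rfl

lemma coface_app_top (j : Fin (N + 2)) :
    (coface j).app N (top N) = (simplexDSet (N + 1)).d N j (top (N + 1)) :=
  rfl

lemma coface_app_injective (j : Fin (N + 2)) : Function.Injective ((coface j).app m) :=
  fun _ _ h => Subtype.ext (funext fun a =>
    Fin.succAbove_right_injective (congrFun (congrArg Subtype.val h) a))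

lemma dim_le (x : (simplexDSet N).X m) : m ≤ N := by
  simpa using Fintype.card_le_of_injective x.1 x.2.2

lemma dim_eq_of_surjective (x : (simplexDSet N).X m) (hx : Function.Surjective x.1) :
    m = N := by
  have := Fintype.card_le_of_surjective x.1 hx
  simp only [Fintype.card_fin] at this
  exact le_antisymm (dim_le x) (by omega)

lemma eq_top (x : (simplexDSet N).X N) : x = top N :=
  Subtype.ext ((x.2.1.strictMono_of_injective x.2.2).eq_id)

lemma exists_notMem_range (x : (simplexDSet N).X m) (hm : m ≠ N) :
    ∃ j, j ∉ Set.range x.1 := by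
  by_contra! h
  exact hm (dim_eq_of_surjective x h)

lemma exists_coface_app_eq {j : Fin (N + 2)} (x : (simplexDSet (N + 1)).X m)
    (hj : j ∉ Set.range x.1) : ∃ g, (coface j).app m g = x := by
  choose g hg using fun a => Fin.exists_succAbove_eq fun h => hj ⟨a, h⟩
  have hx : j.succAbove ∘ g = x.1 := funext hg
  refine ⟨⟨g, fun a b hab => ?_, fun a b hab => x.2.2 ?_⟩, Subtype.ext hx⟩
  · rw [← (Fin.strictMono_succAbove j).le_iff_le]
    have := x.2.1 hab
    rwa [← hx] at this
  · rw [← hg a, ← hg b, hab]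

end simplexDSet

open simplexDSet

/-- The simplicial identity `d_a d_j = d_b d_j'`, in a form symmetric in `j` and `j'`. -/
lemma exists_succAbove_eq_and_d_d_eq {N : ℕ} {j j' : Fin (N + 3)} (h : j ≠ j') :
    ∃ a b : Fin (N + 2), j.succAbove a = j' ∧ j'.succAbove b = j ∧
      ∀ (L : DSet) (x : L.X (N + 2)), L.d N a (L.d (N + 1) j x) = L.d N b (L.d (N + 1) j' x) := by
  wlog hlt : j < j' generalizing j j'
  · obtain ⟨a, b, ha, hb, hd⟩ := this h.symm (h.lt_or_gt.resolve_left hlt)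
    exact ⟨b, a, hb, ha, fun L x => (hd L x).symm⟩
  obtain ⟨i, rfl⟩ := Fin.exists_castSucc_eq.2 (Fin.ne_last_of_lt hlt)
  obtain ⟨k, rfl⟩ := Fin.exists_succ_eq.2 (Fin.ne_zero_of_lt hlt)
  have hik : i ≤ k := Fin.castSucc_lt_succ_iff.1 hlt
  exact ⟨k, i, Fin.succAbove_castSucc_of_le i k hik, Fin.succAbove_of_castSucc_lt _ _ hlt,
    fun L x => (L.rel N i k hik x).symm⟩

theorem DHom.ext_simplex {L : DSet} {N : ℕ} {φ ψ : DHom (simplexDSet N) L}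
    (h : φ.app N (top N) = ψ.app N (top N)) : φ = ψ := by
  induction N with
  | zero =>
    ext m x
    obtain rfl : m = 0 := Nat.le_zero.1 (dim_le x)
    rw [eq_top x, h]
  | succ N ih =>
    ext m x
    by_cases hm : m = N + 1
    · subst hm
      rw [eq_top x, h]
    obtain ⟨j, hj⟩ := exists_notMem_range x hm
    obtain ⟨g, rfl⟩ := exists_coface_app_eq x hj
    have hj : (coface j).comp φ = (coface j).comp ψ := ih (by
      show φ.app N ((coface j).app N (top N)) = ψ.app N ((coface j).app N (top N))
      rw [coface_app_top, φ.comm, ψ.comm, h])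
    exact DHom.congr_app hj m g

lemma DHom.app_eq_app_of_coface_app_eq {L : DSet} {N m : ℕ} {x : L.X (N + 1)}
    {φ : Fin (N + 2) → DHom (simplexDSet N) L} (hφ : ∀ j, (φ j).app N (top N) = L.d N j x)
    {j j' : Fin (N + 2)} {g g' : (simplexDSet N).X m}
    (h : (coface j).app m g = (coface j').app m g') :
    (φ j).app m g = (φ j').app m g' := by
  have hval (t : Fin (m + 1)) : j.succAbove (g.1 t) = j'.succAbove (g'.1 t) :=
    congrFun (congrArg Subtype.val h) t
  rcases eq_or_ne j j' with rfl | hne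
  · rw [coface_app_injective j h]
  cases N with
  | zero =>
    -- `Δ[1]` has no vertex other than `j` and `j'`.
    have h₁ := Fin.succAbove_ne j (g.1 0)
    have h₂ := Fin.succAbove_ne j' (g'.1 0)
    rw [hval] at h₁
    simp only [ne_eq, Fin.ext_iff] at h₁ h₂ hne
    omega
  | succ N =>
    -- The simplex lies in the codimension-two face shared by the facets `j` and `j'`, where
    -- `φ j` and `φ j'` restrict to the same map by uniqueness.
    obtain ⟨a, b, ha, hb, hd⟩ := exists_succAbove_eq_and_d_d_eq hne
    have hg : a ∉ Set.range g.1 := fun ⟨t, ht⟩ =>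
      Fin.succAbove_ne j' (g'.1 t) ((hval t).symm.trans (ht ▸ ha))
    have hg' : b ∉ Set.range g'.1 := fun ⟨t, ht⟩ =>
      Fin.succAbove_ne j (g.1 t) ((hval t).trans (ht ▸ hb))
    obtain ⟨k, rfl⟩ := exists_coface_app_eq g hg
    obtain ⟨k', rfl⟩ := exists_coface_app_eq g' hg'
    have hcoface : ∀ k, (coface j).app m ((coface a).app m k) =
        (coface j').app m ((coface b).app m k) := fun k =>
      Subtype.ext (funext fun t =>
        congrFun (congrArg Subtype.val (hd (simplexDSet (N + 2)) (top _))) (k.1 t))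
    obtain rfl : k = k' :=
      coface_app_injective b (coface_app_injective j' ((hcoface k).symm.trans h))
    have hcomp : (coface a).comp (φ j) = (coface b).comp (φ j') := DHom.ext_simplex (by
      show (φ j).app N ((coface a).app N (top N)) = (φ j').app N ((coface b).app N (top N))
      rw [coface_app_top, coface_app_top, (φ j).comm, (φ j').comm, hφ, hφ, hd])
    exact DHom.congr_app hcomp m k

lemma DSet.exists_dhom_simplex_succ {L : DSet} {N : ℕ} (x : L.X (N + 1))
    (φ : Fin (N + 2) → DHom (simplexDSet N) L) (hφ : ∀ j, (φ j).app N (top N) = L.d N j x) :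
    ∃ ψ : DHom (simplexDSet (N + 1)) L, ψ.app (N + 1) (top (N + 1)) = x := by
  classical
  let app (m : ℕ) (y : (simplexDSet (N + 1)).X m) : L.X m :=
    if hm : m = N + 1 then cast (congrArg L.X hm.symm) x
    else (φ (exists_notMem_range y hm).choose).app m
      (exists_coface_app_eq y (exists_notMem_range y hm).choose_spec).choose
  have app_coface : ∀ m j g, app m ((coface j).app m g) = (φ j).app m g := by
    intro m j g
    have hm : m ≠ N + 1 := by
      have := dim_le g
      omega
    simp only [app, dif_neg hm]
    exact DHom.app_eq_app_of_coface_app_eq hφ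
      (exists_coface_app_eq _ (exists_notMem_range _ hm).choose_spec).choose_spec
  have app_top : app (N + 1) (top (N + 1)) = x := dif_pos rfl
  refine ⟨⟨app, fun m p y => ?_⟩, app_top⟩
  by_cases hm : m = N
  · subst hm
    rw [eq_top y, ← coface_app_top, app_coface, hφ, app_top]
  · obtain ⟨j, hj⟩ := exists_notMem_range y (by omega)
    obtain ⟨g, rfl⟩ := exists_coface_app_eq y hj
    rw [← (coface j).comm, app_coface, app_coface, (φ j).comm]

/-- The Yoneda lemma for `Δ[N]`, existence half. -/
theorem DSet.exists_dhom_simplex (L : DSet) :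
    ∀ (N : ℕ) (x : L.X N), ∃ φ : DHom (simplexDSet N) L, φ.app N (top N) = x
  | 0, x => ⟨⟨fun _ y => cast (congrArg L.X (Nat.le_zero.1 (dim_le y)).symm) x,
      fun _ _ y => absurd (dim_le y) (by omega)⟩, rfl⟩
  | N + 1, x => by
    choose φ hφ using fun j => L.exists_dhom_simplex N (L.d N j x)
    exact exists_dhom_simplex_succ x φ hφ

lemma DSub.app_mem_of_app_top_mem {L : DSet} (K : DSub L) {N : ℕ}
    (φ : DHom (simplexDSet N) L) (h : φ.app N (top N) ∈ K.mem N) (m : ℕ)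
    (x : (simplexDSet N).X m) : φ.app m x ∈ K.mem m := by
  obtain ⟨ψ, hψ⟩ := K.toDSet.exists_dhom_simplex N ⟨_, h⟩
  have : ψ.comp K.ι = φ := DHom.ext_simplex (congrArg Subtype.val hψ)
  exact this ▸ (ψ.app m x).2

lemma mem_range_hornIncl_app_iff {N : ℕ} {i : Fin (N + 1)} {x : (simplexDSet N).X m} :
    x ∈ Set.range ((hornIncl N i).app m) ↔ ∃ j, j ≠ i ∧ j ∉ Set.range x.1 :=
  ⟨by rintro ⟨y, rfl⟩; exact y.2.2, fun h => ⟨⟨x.1, x.2, h⟩, rfl⟩⟩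

section Horn

variable {n m : ℕ} {i : Fin (n + 2)}

lemma notMem_range_hornIncl_app_iff {x : (simplexDSet (n + 1)).X m} :
    x ∉ Set.range ((hornIncl (n + 1) i).app m) ↔
      (∃ _ : m = n + 1, HEq x (top (n + 1))) ∨
        (∃ _ : m = n, HEq x ((simplexDSet (n + 1)).d n i (top (n + 1)))) := by
  rw [mem_range_hornIncl_app_iff]
  constructor
  · intro hx
    push Not at hx
    by_cases hi : i ∈ Set.range x.1
    · have hm := dim_eq_of_surjective x fun j => if hj : j = i then hj ▸ hi else hx j hj
      subst hm
      exact Or.inl ⟨rfl, heq_of_eq (eq_top x)⟩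
    · obtain ⟨g, rfl⟩ := exists_coface_app_eq x hi
      have hm := dim_eq_of_surjective g fun k =>
        let ⟨t, ht⟩ := hx _ (Fin.succAbove_ne i k)
        ⟨t, Fin.succAbove_right_injective ht⟩
      subst hm
      exact Or.inr ⟨rfl, heq_of_eq (by rw [eq_top g]; rfl)⟩
  · rintro (⟨rfl, hx⟩ | ⟨rfl, hx⟩) ⟨j, hji, hj⟩ <;> cases eq_of_heq hx
    · exact hj ⟨j, rfl⟩
    · obtain ⟨k, hk⟩ := Fin.exists_succAbove_eq hji
      exact hj ⟨k, hk⟩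

lemma eq_of_notMem_range_hornIncl_app {x y : (simplexDSet (n + 1)).X m}
    (hx : x ∉ Set.range ((hornIncl (n + 1) i).app m))
    (hy : y ∉ Set.range ((hornIncl (n + 1) i).app m)) : x = y := by
  rcases notMem_range_hornIncl_app_iff.1 hx with ⟨hm, hx⟩ | ⟨hm, hx⟩ <;>
    rcases notMem_range_hornIncl_app_iff.1 hy with ⟨hm', hy⟩ | ⟨hm', hy⟩
  all_goals first | omega | exact eq_of_heq (hx.trans hy.symm)

lemma top_notMem_range_hornIncl_app :
    top (n + 1) ∉ Set.range ((hornIncl (n + 1) i).app (n + 1)) :=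
  notMem_range_hornIncl_app_iff.2 (Or.inl ⟨rfl, HEq.rfl⟩)

lemma d_top_notMem_range_hornIncl_app :
    (simplexDSet (n + 1)).d n i (top (n + 1)) ∉ Set.range ((hornIncl (n + 1) i).app n) :=
  notMem_range_hornIncl_app_iff.2 (Or.inr ⟨rfl, HEq.rfl⟩)

lemma app_hornIncl_app_mem {L : DSet} (K : DSub L) (v : DHom (simplexDSet (n + 1)) L)
    (hv : ∀ j, j ≠ i → L.d n j (v.app (n + 1) (top (n + 1))) ∈ K.mem n)
    (y : (hornDSet (n + 1) i).X m) : v.app m ((hornIncl (n + 1) i).app m y) ∈ K.mem m := by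
  obtain ⟨j, hji, hj⟩ := y.2.2
  obtain ⟨g, hg⟩ := exists_coface_app_eq ((hornIncl (n + 1) i).app m y) hj
  rw [← hg]
  refine K.app_mem_of_app_top_mem ((coface j).comp v) ?_ m g
  show v.app n ((coface j).app n (top n)) ∈ K.mem n
  rw [coface_app_top, v.comm]
  exact hv j hji

end Horn

theorem IsElemExpansion.exists_isPushoutSq {L : DSet} {K : DSub L} {n : ℕ}
    (h : IsElemExpansion L K n) :
    ∃ (i : Fin (n + 2)) (u : DHom (hornDSet (n + 1) i) K.toDSet)
      (v : DHom (simplexDSet (n + 1)) L), IsPushoutSq (hornIncl (n + 1) i) u v K.ι := by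
  obtain ⟨e, i, he, hei, hej, hcover⟩ := h
  obtain ⟨v, rfl⟩ := L.exists_dhom_simplex (n + 1) e
  have hface := v.comm n i (top (n + 1))
  refine ⟨i, K.lift ((hornIncl (n + 1) i).comp v) fun m => app_hornIncl_app_mem K v hej, v,
    IsPushoutSq.of_bijOn rfl
    fun m => ⟨fun x hx => ?_, fun x hx y hy _ => eq_of_notMem_range_hornIncl_app hx hy,
      fun z hz => ?_⟩⟩
  · rcases notMem_range_hornIncl_app_iff.1 hx with ⟨rfl, hx⟩ | ⟨rfl, hx⟩ <;> cases eq_of_heq hx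
    · exact he
    · rwa [hface]
  · rcases (hcover m z).resolve_left hz with ⟨rfl, hz⟩ | ⟨rfl, hz⟩ <;> cases eq_of_heq hz
    · exact ⟨_, top_notMem_range_hornIncl_app, rfl⟩
    · exact ⟨_, d_top_notMem_range_hornIncl_app, hface⟩

theorem IsPushoutSq.isElemExpansion {L : DSet} {K : DSub L} {n : ℕ} {i : Fin (n + 2)}
    {u : DHom (hornDSet (n + 1) i) K.toDSet} {v : DHom (simplexDSet (n + 1)) L}
    (h : IsPushoutSq (hornIncl (n + 1) i) u v K.ι) : IsElemExpansion L K n := by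
  have hbij := h.bijOn
  refine ⟨v.app (n + 1) (top (n + 1)), i, (hbij _).mapsTo top_notMem_range_hornIncl_app, ?_,
    fun j hj => ?_, fun m z => or_iff_not_imp_left.2 fun hz => ?_⟩
  · rw [← v.comm]
    exact (hbij n).mapsTo d_top_notMem_range_hornIncl_app
  · obtain ⟨y, hy⟩ := mem_range_hornIncl_app_iff (x := (simplexDSet (n + 1)).d n j (top _)) |>.2
      ⟨j, hj, fun ⟨t, ht⟩ => Fin.succAbove_ne j t ht⟩
    rw [← v.comm, ← hy]
    exact app_app_mem_of_comp_eq h.1 n y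
  · obtain ⟨x, hx, rfl⟩ := (hbij m).surjOn hz
    rcases notMem_range_hornIncl_app_iff.1 hx with ⟨rfl, hx⟩ | ⟨rfl, hx⟩ <;> cases eq_of_heq hx
    · exact Or.inl ⟨rfl, HEq.rfl⟩
    · exact Or.inr ⟨rfl, heq_of_eq (v.comm _ i _)⟩

/-- An inclusion `K ⊆ L` of Δ-sets is an elementary expansion of
dimension `n+1` if and only if there is a pushout square of Δ-sets whose top row is a
horn inclusion `Λ^i[n+1] → Δ[n+1]`, whose left vertical map is a map `Λ^i[n+1] → K`,
and whose bottom row is the inclusion `K → L`, for some `i ∈ {0, …, n+1}`. -/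
theorem isElemExpansion_iff_pushout_of_horn (L : DSet) (K : DSub L) (n : ℕ) :
    IsElemExpansion L K n ↔
      ∃ (i : Fin (n + 2)) (u : DHom (hornDSet (n + 1) i) K.toDSet)
        (v : DHom (simplexDSet (n + 1)) L),
        IsPushoutSq (hornIncl (n + 1) i) u v K.ι :=
  ⟨IsElemExpansion.exists_isPushoutSq, fun ⟨_, _, _, h⟩ => h.isElemExpansion⟩
end
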